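/- arXiv:2407.20527 — 3 statements merged into one kernel-verified Lean document; each statement's English description precedes it below -/
import Mathlib

section
/- Let I be a matroidal ideal of degree d ≥ 2 in R = K[x_1,...,x_n] with supp(I) = {x_1,...,x_n}. Then there exist pairwise disjoint nonempty subsets S_1,...,S_m of the variable set [n] with m ≥ d and union equal to [n], such that for any two variables x, y: xy divides some minimal generator of I if and only if x and y lie in different blocks S_i ≠ S_j, and xy divides no minimal generator if and only if x and y lie in the same block S_i. -/
noncomputable section
open MvPolynomial

variable (K : Type*) [Field K] (n : ℕ)

/-- Total degree of an exponent vector. -/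
def expDeg (m : Fin n →₀ ℕ) : ℕ := m.sum fun _ e => e

/-- The minimal monomial generators of a monomial ideal, encoded by their
exponent vectors: monomials in `I` that are minimal under divisibility. -/
def minGens (I : Ideal (MvPolynomial (Fin n) K)) : Set (Fin n →₀ ℕ) :=
  {m | (monomial m (1 : K)) ∈ I ∧
    ∀ m' : Fin n →₀ ℕ, (monomial m' (1 : K)) ∈ I → m' ≤ m → m' = m}

/-- A monomial ideal: an ideal generated by monomials. -/
def IsMonomialIdeal (I : Ideal (MvPolynomial (Fin n) K)) : Prop :=
  ∃ S : Set (Fin n →₀ ℕ), I = Ideal.span ((fun m => monomial m (1 : K)) '' S)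

/-- A polymatroidal ideal of degree `d`: a monomial ideal all of whose minimal
generators have degree `d`, satisfying the exchange property. -/
def IsPolymatroidal (I : Ideal (MvPolynomial (Fin n) K)) (d : ℕ) : Prop :=
  IsMonomialIdeal K n I ∧
  (∀ m ∈ minGens K n I, expDeg n m = d) ∧
  (∀ u ∈ minGens K n I, ∀ v ∈ minGens K n I, ∀ i : Fin n, v i < u i →
    ∃ j : Fin n, u j < v j ∧
      (u - Finsupp.single i 1 + Finsupp.single j 1) ∈ minGens K n I)

/-- A matroidal ideal: a squarefree polymatroidal ideal. -/
def IsMatroidal (I : Ideal (MvPolynomial (Fin n) K)) (d : ℕ) : Prop :=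
  IsPolymatroidal K n I d ∧ ∀ m ∈ minGens K n I, ∀ i, m i ≤ 1

/-- The support of a monomial ideal: variables dividing some minimal generator. -/
def suppI (I : Ideal (MvPolynomial (Fin n) K)) : Set (Fin n) :=
  {i | ∃ m ∈ minGens K n I, m i ≠ 0}

/-- The colon ideal `(I : x_i)`. -/
def colonVar (I : Ideal (MvPolynomial (Fin n) K)) (i : Fin n) :
    Ideal (MvPolynomial (Fin n) K) :=
  Submodule.colon I ((Ideal.span {X i} : Ideal (MvPolynomial (Fin n) K)) : Set (MvPolynomial (Fin n) K))

/-- The height of an ideal: infimum of heights of primes containing it. -/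
def htIdeal (I : Ideal (MvPolynomial (Fin n) K)) : ℕ∞ :=
  ⨅ (p : PrimeSpectrum (MvPolynomial (Fin n) K)) (_ : I ≤ p.asIdeal),
    Order.height p

/-- An ideal is unmixed if all associated primes of `R/I` have the same height. -/
def IsUnmixed (I : Ideal (MvPolynomial (Fin n) K)) : Prop :=
  ∀ p ∈ associatedPrimes (MvPolynomial (Fin n) K) (MvPolynomial (Fin n) K ⧸ I),
  ∀ q ∈ associatedPrimes (MvPolynomial (Fin n) K) (MvPolynomial (Fin n) K ⧸ I),
    htIdeal K n p = htIdeal K n q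

/-- The graded maximal ideal `(x_1, …, x_n)`. -/
def maxIdeal : Ideal (MvPolynomial (Fin n) K) :=
  Ideal.span (Set.range (X : Fin n → MvPolynomial (Fin n) K))

/-- The monomial prime ideal generated by the variables in `s`. -/
def primeOf (s : Finset (Fin n)) : Ideal (MvPolynomial (Fin n) K) :=
  Ideal.span ((fun i => (X i : MvPolynomial (Fin n) K)) '' s)

/-- The squarefree Veronese ideal of degree `d`. -/
def sqVeronese (d : ℕ) : Ideal (MvPolynomial (Fin n) K) :=
  Ideal.span {f | ∃ e : Finset (Fin n), e.card = d ∧ f = ∏ i ∈ e, X i}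

/-- The variables belonging to an ideal (the variable generators of a
monomial prime). -/
def varsOf (p : Ideal (MvPolynomial (Fin n) K)) : Set (Fin n) :=
  {i | (X i : MvPolynomial (Fin n) K) ∈ p}

/-- `I` is connected in codimension one: any two distinct minimal primes are
linked by a chain of minimal primes in which consecutive primes generate an
ideal on `height I + 1` variables. -/
def ConnCodimOne (I : Ideal (MvPolynomial (Fin n) K)) : Prop :=
  ∀ p ∈ I.minimalPrimes, ∀ q ∈ I.minimalPrimes, p ≠ q →
    ∃ (r : ℕ) (c : Fin (r + 1) → Ideal (MvPolynomial (Fin n) K)),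
      (∀ i, c i ∈ I.minimalPrimes) ∧ c 0 = p ∧ c (Fin.last r) = q ∧
      ∀ i : Fin r,
        ((varsOf K n (c i.castSucc ⊔ c i.succ)).ncard : ℕ∞) = htIdeal K n I + 1

/-- `R/I` is Cohen–Macaulay: there is a regular sequence on `R/I` inside the
graded maximal ideal whose length equals the Krull dimension of `R/I`. -/
def QuotientCM (I : Ideal (MvPolynomial (Fin n) K)) : Prop :=
  ∃ rs : List (MvPolynomial (Fin n) K),
    (∀ r ∈ rs, r ∈ maxIdeal K n) ∧
    RingTheory.Sequence.IsRegular (MvPolynomial (Fin n) K ⧸ I) rs ∧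
    ((rs.length : ℕ∞) : WithBot ℕ∞) = ringKrullDim (MvPolynomial (Fin n) K ⧸ I)

/-- A matroidal ideal of degree `d ≥ 2` with full support induces a
partition `S_1, …, S_m` of the variables (`m ≥ d`) such that two variables are
simultaneously divisible into a minimal generator iff they lie in different blocks. -/
theorem stmt1 {K : Type*} [Field K] {n : ℕ} (hn : 0 < n)
    (I : Ideal (MvPolynomial (Fin n) K)) (d : ℕ) (hd : 2 ≤ d)
    (hI : IsMatroidal K n I d) (hsupp : suppI K n I = Set.univ) :
    ∃ (m : ℕ) (S : Fin m → Set (Fin n)),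
      d ≤ m ∧
      (∀ i, (S i).Nonempty) ∧
      (∀ i j, i ≠ j → Disjoint (S i) (S j)) ∧
      (⋃ i, S i) = Set.univ ∧
      (∀ x y : Fin n,
        ((∃ u ∈ minGens K n I, Finsupp.single x 1 + Finsupp.single y 1 ≤ u) ↔
          ∃ i j, i ≠ j ∧ x ∈ S i ∧ y ∈ S j)) ∧
      (∀ x y : Fin n,
        ((∀ u ∈ minGens K n I, ¬ (Finsupp.single x 1 + Finsupp.single y 1 ≤ u)) ↔
          ∃ i, x ∈ S i ∧ y ∈ S i)) := by
  classical
  obtain ⟨⟨_, hdeg, hex⟩, hsq⟩ := hI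
  -- basic lemmas about pair divisibility
  have hpair_of : ∀ (x y : Fin n) (u : Fin n →₀ ℕ), x ≠ y → u x ≠ 0 → u y ≠ 0 →
      Finsupp.single x 1 + Finsupp.single y 1 ≤ u := by
    intro x y u hxy hx hy
    rw [Finsupp.le_def]
    intro a
    simp only [Finsupp.add_apply, Finsupp.single_apply]
    split_ifs with h1 h2 h2
    · exact absurd (h1.trans h2.symm) hxy
    · subst h1; omega
    · subst h2; omega
    · omega
  have hval : ∀ (x y : Fin n) (u : Fin n →₀ ℕ),
      Finsupp.single x 1 + Finsupp.single y 1 ≤ u → u x ≠ 0 ∧ u y ≠ 0 := by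
    intro x y u h
    rw [Finsupp.le_def] at h
    constructor
    · have h1 := h x
      rw [Finsupp.add_apply, Finsupp.single_eq_same] at h1
      omega
    · have h2 := h y
      rw [Finsupp.add_apply, Finsupp.single_eq_same] at h2
      omega
  have hcard : ∀ u ∈ minGens K n I, u.support.card = d := by
    intro u hu
    have h1 := hdeg u hu
    rw [expDeg, Finsupp.sum] at h1
    rw [← h1, Finset.card_eq_sum_ones]
    refine Finset.sum_congr rfl ?_
    intro a ha
    have h2 := hsq u hu a
    have h3 := Finsupp.mem_support_iff.mp ha
    omega
  have hrefl : ∀ x : Fin n, ∀ u ∈ minGens K n I,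
      ¬ (Finsupp.single x 1 + Finsupp.single x 1 ≤ u) := by
    intro x u hu h
    rw [Finsupp.le_def] at h
    have h1 := h x
    rw [Finsupp.add_apply, Finsupp.single_eq_same] at h1
    have h2 := hsq u hu x
    omega
  have hsymm : ∀ x y : Fin n,
      (∀ u ∈ minGens K n I, ¬ (Finsupp.single x 1 + Finsupp.single y 1 ≤ u)) →
      ∀ u ∈ minGens K n I, ¬ (Finsupp.single y 1 + Finsupp.single x 1 ≤ u) := by
    intro x y h u hu hle
    exact h u hu (by rwa [add_comm])
  -- transitivity, via the exchange property
  have htrans : ∀ x y z : Fin n,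
      (∀ u ∈ minGens K n I, ¬ (Finsupp.single x 1 + Finsupp.single y 1 ≤ u)) →
      (∀ u ∈ minGens K n I, ¬ (Finsupp.single y 1 + Finsupp.single z 1 ≤ u)) →
      ∀ u ∈ minGens K n I, ¬ (Finsupp.single x 1 + Finsupp.single z 1 ≤ u) := by
    intro x y z hxy hyz u hu hle
    rcases eq_or_ne x y with rfl | hxyne
    · exact hyz u hu hle
    rcases eq_or_ne y z with rfl | hyzne
    · exact hxy u hu hle
    rcases eq_or_ne x z with rfl | hxzne
    · exact hrefl x u hu hle
    obtain ⟨hux, huz⟩ := hval x z u hle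
    have huy : u y = 0 := by
      by_contra huy
      exact hxy u hu (hpair_of x y u hxyne hux huy)
    have hy : y ∈ suppI K n I := by rw [hsupp]; trivial
    obtain ⟨v, hv, hvy⟩ := hy
    -- minimize |supp u \ supp w| over generators w with y ∈ supp w
    set meas : (Fin n →₀ ℕ) → ℕ :=
      fun w => (u.support.filter fun a => w a = 0).card with hmeas
    have hTne : {k | ∃ w, (w ∈ minGens K n I ∧ w y ≠ 0) ∧ meas w = k}.Nonempty :=
      ⟨meas v, v, ⟨hv, hvy⟩, rfl⟩
    obtain ⟨w, ⟨hw, hwy⟩, hwk⟩ := Nat.sInf_mem hTne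
    have hminw : ∀ w', w' ∈ minGens K n I → w' y ≠ 0 → meas w ≤ meas w' := by
      intro w' h1 h2
      rw [hwk]
      exact Nat.sInf_le ⟨w', ⟨h1, h2⟩, rfl⟩
    have hsub : ∀ a, w a ≠ 0 → a ≠ y → u a ≠ 0 := by
      by_contra hcon
      push_neg at hcon
      obtain ⟨a, hwa, hay, hua⟩ := hcon
      have hlt : u a < w a := by omega
      obtain ⟨j, hj, hw'⟩ := hex w hw u hu a hlt
      have huj1 := hsq u hu j
      have hwj : w j = 0 := by omega
      have huj : u j ≠ 0 := by omega
      have hjy : j ≠ y := fun h => huj (by rw [h]; exact huy)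
      have hja : j ≠ a := fun h => hwa (by rw [← h]; exact hwj)
      set w' := w - Finsupp.single a 1 + Finsupp.single j 1 with hw'def
      have happ : ∀ b, w' b = w b - (Finsupp.single a 1) b + (Finsupp.single j 1) b := by
        intro b
        rw [hw'def, Finsupp.add_apply, Finsupp.tsub_apply]
      have hw'y : w' y ≠ 0 := by
        rw [happ y, Finsupp.single_apply, Finsupp.single_apply,
          if_neg hay, if_neg hjy]
        omega
      have hfilter : (u.support.filter fun b => w' b = 0)
          = (u.support.filter fun b => w b = 0).erase j := by
        ext b
        simp only [Finset.mem_erase, Finset.mem_filter, Finsupp.mem_support_iff]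
        constructor
        · rintro ⟨hb1, hb2⟩
          have hba : b ≠ a := fun h => hb1 (by rw [h]; exact hua)
          have hbj : b ≠ j := by
            intro h
            rw [h, happ j, Finsupp.single_apply, Finsupp.single_apply,
              if_neg (fun hh => hja hh.symm), if_pos rfl] at hb2
            omega
          refine ⟨hbj, hb1, ?_⟩
          rw [happ b, Finsupp.single_apply, Finsupp.single_apply,
            if_neg (fun h => hba h.symm), if_neg (fun h => hbj h.symm)] at hb2
          omega
        · rintro ⟨hbj, hb1, hb2⟩
          have hba : b ≠ a := fun h => hb1 (by rw [h]; exact hua)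
          refine ⟨hb1, ?_⟩
          rw [happ b, Finsupp.single_apply, Finsupp.single_apply,
            if_neg (fun h => hba h.symm), if_neg (fun h => hbj h.symm)]
          omega
      have hjmem : j ∈ u.support.filter fun b => w b = 0 := by
        simp only [Finset.mem_filter, Finsupp.mem_support_iff]
        exact ⟨huj, hwj⟩
      have hlt2 : meas w' < meas w := by
        rw [hmeas]
        simp only
        rw [hfilter]
        exact Finset.card_erase_lt_of_mem hjmem
      have := hminw w' hw' hw'y
      omega
    have hwx : w x = 0 := by
      by_contra h
      exact hxy w hw (hpair_of x y w hxyne h hwy)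
    have hwz : w z = 0 := by
      by_contra h
      exact hyz w hw (hpair_of y z w hyzne hwy h)
    have hsubset : w.support ⊆ insert y ((u.support.erase x).erase z) := by
      intro b hb
      rw [Finsupp.mem_support_iff] at hb
      rcases eq_or_ne b y with rfl | hby
      · exact Finset.mem_insert_self _ _
      · refine Finset.mem_insert_of_mem ?_
        rw [Finset.mem_erase, Finset.mem_erase, Finsupp.mem_support_iff]
        exact ⟨fun h => hb (by rw [h]; exact hwz),
          fun h => hb (by rw [h]; exact hwx), hsub b hb hby⟩
    have hzmem : z ∈ u.support.erase x := by
      rw [Finset.mem_erase, Finsupp.mem_support_iff]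
      exact ⟨Ne.symm hxzne, huz⟩
    have hxmem : x ∈ u.support := Finsupp.mem_support_iff.mpr hux
    have hcu := hcard u hu
    have hcw := hcard w hw
    have hc1 : (u.support.erase x).card = d - 1 := by
      rw [Finset.card_erase_of_mem hxmem, hcu]
    have hc2 : ((u.support.erase x).erase z).card = d - 1 - 1 := by
      rw [Finset.card_erase_of_mem hzmem, hc1]
    have hle2 : w.support.card ≤ ((u.support.erase x).erase z).card + 1 :=
      le_trans (Finset.card_le_card hsubset) (Finset.card_insert_le _ _)
    omega
  -- build the equivalence relation and its quotient
  let s : Setoid (Fin n) :=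
    ⟨fun x y => ∀ u ∈ minGens K n I, ¬ (Finsupp.single x 1 + Finsupp.single y 1 ≤ u),
      ⟨fun x => hrefl x, fun {a b} h => hsymm a b h,
        fun {a b c} h1 h2 => htrans a b c h1 h2⟩⟩
  have hfin : Finite (Quotient s) := Quotient.finite _
  obtain ⟨m, ⟨e⟩⟩ := Finite.exists_equiv_fin (Quotient s)
  -- a generator exists
  have hx0 : (⟨0, hn⟩ : Fin n) ∈ suppI K n I := by rw [hsupp]; trivial
  obtain ⟨u0, hu0, -⟩ := hx0
  refine ⟨m, fun i => {x | e (Quotient.mk s x) = i}, ?_, ?_, ?_, ?_, ?_, ?_⟩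
  · -- d ≤ m
    have hinj : Set.InjOn (fun x => e (Quotient.mk s x)) ↑u0.support := by
      intro a ha b hb hab
      by_contra hne
      rw [Finset.mem_coe, Finsupp.mem_support_iff] at ha hb
      have hr : s.r a b := Quotient.exact (e.injective hab)
      exact hr u0 hu0 (hpair_of a b u0 hne ha hb)
    have h := Finset.card_le_card_of_injOn (fun x => e (Quotient.mk s x))
      (fun a _ => Finset.mem_univ _) hinj
    rw [hcard u0 hu0, Finset.card_univ, Fintype.card_fin] at h
    exact h
  · -- nonempty
    intro i
    exact ⟨(e.symm i).out, by simp only [Set.mem_setOf_eq, Quotient.out_eq,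
      Equiv.apply_symm_apply]⟩
  · -- disjoint
    intro i j hij
    rw [Set.disjoint_left]
    intro x hxi hxj
    exact hij (hxi.symm.trans hxj)
  · -- union
    exact Set.eq_univ_iff_forall.mpr fun x => Set.mem_iUnion.mpr ⟨e (Quotient.mk s x), rfl⟩
  · -- first iff
    intro x y
    constructor
    · rintro ⟨u, hu, hle⟩
      refine ⟨e (Quotient.mk s x), e (Quotient.mk s y), ?_, rfl, rfl⟩
      intro heq
      have hr : s.r x y := Quotient.exact (e.injective heq)
      exact hr u hu hle
    · rintro ⟨i, j, hij, hxi, hyj⟩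
      by_contra hcon
      push_neg at hcon
      have hr : s.r x y := fun u hu => hcon u hu
      exact hij ((hxi.symm.trans (congrArg e (Quotient.sound hr))).trans hyj)
  · -- second iff
    intro x y
    constructor
    · intro h
      have hr : s.r x y := h
      exact ⟨e (Quotient.mk s x), rfl, (congrArg e (Quotient.sound hr)).symm⟩
    · rintro ⟨i, hxi, hyi⟩
      have hr : s.r x y := Quotient.exact (e.injective (hxi.trans hyi.symm))
      exact hr
end
end

section
/- Let I be a matroidal ideal of degree d ≥ 2 in R = K[x_1,...,x_n] with full support. Then for any two variables x_i, x_j, either supp(I : x_i) = supp(I : x_j) or supp(I : x_i) ∪ supp(I : x_j) = {x_1,...,x_n}. -/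
noncomputable section
open MvPolynomial

variable (K : Type*) [Field K] (n : ℕ)

/-!
The minimal generators of `I : x_i` are the `u / x_i` with `u` a minimal generator of `I`
divisible by `x_i`: a generator `u` not divisible by `x_i` can be traded, by repeated exchange,
for a generator dividing `u x_i` that involves `x_i`. Hence `supp (I : x_i)` is the set
`N(i) = neighborVars I i` of variables sharing a generator with `x_i`. If `x_k` never shares a
generator with `x_i`, then `N(i) = N(k)`: given `u ∋ x_i, x_m`, the generator dividing `u x_k`
that involves `x_k` misses `x_i`, and having the same degree as `u` it can miss only one variable
of `u`, so it contains `x_m`. A variable outside `N(i) ∪ N(j)` therefore forces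
`N(i) = N(k) = N(j)`.
-/

section Matroidal

open Finsupp

variable {K : Type*} [Field K] {n : ℕ}

def neighborVars (I : Ideal (MvPolynomial (Fin n) K)) (i : Fin n) : Set (Fin n) :=
  {k | k ≠ i ∧ ∃ g ∈ minGens K n I, g i ≠ 0 ∧ g k ≠ 0}

variable {I : Ideal (MvPolynomial (Fin n) K)} {d : ℕ}

lemma expDeg_eq_degree (m : Fin n →₀ ℕ) : expDeg n m = m.degree := rfl

lemma monomial_mem_colonVar_iff {i : Fin n} {m : Fin n →₀ ℕ} :
    monomial m (1 : K) ∈ colonVar K n I i ↔ monomial (m + single i 1) (1 : K) ∈ I := by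
  rw [colonVar, Ideal.mem_colon_span_singleton, X, monomial_mul, one_mul]

lemma exists_mem_minGens_le {m : Fin n →₀ ℕ} (hm : monomial m (1 : K) ∈ I) :
    ∃ g ∈ minGens K n I, g ≤ m := by
  obtain ⟨g, ⟨hgI, hgm⟩, hmin⟩ :=
    wellFounded_lt.has_min {g | monomial g (1 : K) ∈ I ∧ g ≤ m} ⟨m, hm, le_rfl⟩
  refine ⟨g, ⟨hgI, fun g' hg'I hg'g => ?_⟩, hgm⟩
  by_contra hne
  exact hmin g' ⟨hg'I, hg'g.trans hgm⟩ (lt_of_le_of_ne hg'g hne)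

lemma sub_single_mem_minGens_colonVar {g : Fin n →₀ ℕ} (hg : g ∈ minGens K n I) {i : Fin n}
    (hgi : g i ≠ 0) : g - single i 1 ∈ minGens K n (colonVar K n I i) := by
  have hig : single i 1 ≤ g := single_le_iff.2 (Nat.one_le_iff_ne_zero.2 hgi)
  refine ⟨by rw [monomial_mem_colonVar_iff, tsub_add_cancel_of_le hig]; exact hg.1,
    fun m hm hmg => ?_⟩
  rw [monomial_mem_colonVar_iff] at hm
  exact eq_tsub_of_add_eq (hg.2 _ hm ((le_tsub_iff_right hig).1 hmg))

lemma IsPolymatroidal.exists_mem_minGens_le_add_single (hI : IsPolymatroidal K n I d)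
    {v : Fin n →₀ ℕ} (hv : v ∈ minGens K n I) {p : Fin n} (hp : p ∈ suppI K n I) :
    ∃ h ∈ minGens K n I, h p ≠ 0 ∧ h ≤ v + single p 1 := by
  -- Take a generator involving `x_p` closest to `v`; an exchange step would bring it closer.
  obtain ⟨h, ⟨hh, hhp⟩, hmin⟩ := (InvImage.wf (· - v) wellFounded_lt).has_min
    {h | h ∈ minGens K n I ∧ h p ≠ 0} hp
  refine ⟨h, hh, hhp, fun l => ?_⟩
  by_contra hl
  have hvl : v l < h l := by
    have := not_le.1 hl
    simp only [Finsupp.add_apply, single_apply] at this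
    split_ifs at this <;> omega
  obtain ⟨j, hj, hh'⟩ := hI.2.2 h hh v hv l hvl
  have hp' : (h - single l 1 + single j 1 : Fin n →₀ ℕ) p ≠ 0 := by
    have := not_le.1 hl
    simp only [Finsupp.add_apply, tsub_apply, single_apply] at this ⊢
    split_ifs at this ⊢ <;> subst_vars <;> omega
  have hle : (h - single l 1 + single j 1 - v : Fin n →₀ ℕ) ≤ h - v := fun a => by
    simp only [Finsupp.add_apply, tsub_apply, single_apply]
    split_ifs <;> subst_vars <;> omega
  have hne : (h - single l 1 + single j 1 - v : Fin n →₀ ℕ) ≠ h - v := fun heq => by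
    have := DFunLike.congr_fun heq l
    simp only [Finsupp.add_apply, tsub_apply, single_apply] at this
    split_ifs at this <;> subst_vars <;> omega
  exact hmin _ ⟨hh', hp'⟩ (lt_of_le_of_ne hle hne)

lemma IsPolymatroidal.mem_minGens_colonVar (hI : IsPolymatroidal K n I d) {i : Fin n}
    (hi : i ∈ suppI K n I) {m : Fin n →₀ ℕ} (hm : m ∈ minGens K n (colonVar K n I i)) :
    ∃ g ∈ minGens K n I, g i ≠ 0 ∧ m = g - single i 1 := by
  obtain ⟨g, hg, hgm⟩ := exists_mem_minGens_le (monomial_mem_colonVar_iff.1 hm.1)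
  obtain ⟨h, hh, hhi, hhm⟩ : ∃ h ∈ minGens K n I, h i ≠ 0 ∧ h - single i 1 ≤ m := by
    by_cases hgi : g i = 0
    · obtain ⟨h, hh, hhi, hhg⟩ := hI.exists_mem_minGens_le_add_single hg hi
      have hgm' : g ≤ m := fun a => by
        have := hgm a
        simp only [Finsupp.add_apply, single_apply] at this
        split_ifs at this <;> subst_vars <;> omega
      exact ⟨h, hh, hhi, (tsub_le_iff_right.2 hhg).trans hgm'⟩
    · exact ⟨g, hg, hgi, tsub_le_iff_right.2 hgm⟩
  exact ⟨h, hh, hhi, (hm.2 _ (sub_single_mem_minGens_colonVar hh hhi).1 hhm).symm⟩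

lemma IsMatroidal.suppI_colonVar (hI : IsMatroidal K n I d) {i : Fin n}
    (hi : i ∈ suppI K n I) : suppI K n (colonVar K n I i) = neighborVars I i := by
  ext k
  constructor
  · rintro ⟨m, hm, hmk⟩
    obtain ⟨g, hg, hgi, rfl⟩ := hI.1.mem_minGens_colonVar hi hm
    have hsq := hI.2 g hg i
    simp only [tsub_apply, single_apply] at hmk
    split_ifs at hmk with hik
    · subst hik; omega
    · exact ⟨Ne.symm hik, g, hg, hgi, by omega⟩
  · rintro ⟨hki, g, hg, hgi, hgk⟩
    refine ⟨g - single i 1, sub_single_mem_minGens_colonVar hg hgi, ?_⟩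
    simpa [single_apply, Ne.symm hki] using hgk

lemma mem_neighborVars_comm {i k : Fin n} : k ∈ neighborVars I i ↔ i ∈ neighborVars I k := by
  simp only [neighborVars, Set.mem_ofPred_eq]
  grind

lemma IsPolymatroidal.neighborVars_subset (hI : IsPolymatroidal K n I d) {i k : Fin n}
    (hk : k ∈ suppI K n I) (hki : k ≠ i) (hk_notMem : k ∉ neighborVars I i) :
    neighborVars I i ⊆ neighborVars I k := by
  have apart : ∀ g ∈ minGens K n I, g i ≠ 0 → g k = 0 := fun g hg hgi => by
    by_contra hgk
    exact hk_notMem ⟨hki, g, hg, hgi, hgk⟩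
  rintro m ⟨hmi, g, hg, hgi, hgm⟩
  have hmk : m ≠ k := by rintro rfl; exact hgm (apart g hg hgi)
  obtain ⟨h, hh, hhk, hhg⟩ := hI.exists_mem_minGens_le_add_single hg hk
  refine ⟨hmk, h, hh, hhk, fun hhm => ?_⟩
  have hhi : h i = 0 := by
    by_contra hhi
    exact hhk (apart h hh hhi)
  -- `h` and `g` have the same degree, so `h ∣ g x_k` cannot miss both `x_i` and `x_m`.
  have hle : h + single i 1 + single m 1 ≤ g + single k 1 := fun a => by
    have := hhg a
    simp only [Finsupp.add_apply, single_apply] at this ⊢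
    split_ifs at this ⊢ <;> subst_vars <;> omega
  have := degree_mono hle
  simp only [map_add, degree_single, ← expDeg_eq_degree, hI.2.1 h hh, hI.2.1 g hg] at this
  omega

lemma IsPolymatroidal.neighborVars_eq_of_notMem (hI : IsPolymatroidal K n I d) {i k : Fin n}
    (hi : i ∈ suppI K n I) (hk : k ∈ suppI K n I) (hk_notMem : k ∉ neighborVars I i) :
    neighborVars I i = neighborVars I k := by
  rcases eq_or_ne k i with rfl | hki
  · rfl
  exact (hI.neighborVars_subset hk hki hk_notMem).antisymm
    (hI.neighborVars_subset hi hki.symm (mem_neighborVars_comm.not.1 hk_notMem))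

end Matroidal

theorem stmt2_general {K : Type*} [Field K] {n : ℕ}
    (I : Ideal (MvPolynomial (Fin n) K)) (d : ℕ)
    (hI : IsMatroidal K n I d) (hsupp : suppI K n I = Set.univ) :
    ∀ i j : Fin n,
      suppI K n (colonVar K n I i) = suppI K n (colonVar K n I j) ∨
      suppI K n (colonVar K n I i) ∪ suppI K n (colonVar K n I j) = Set.univ := by
  intro i j
  have mem_supp (k : Fin n) : k ∈ suppI K n I := hsupp ▸ Set.mem_univ k
  rw [hI.suppI_colonVar (mem_supp i), hI.suppI_colonVar (mem_supp j)]
  by_cases hcover : neighborVars I i ∪ neighborVars I j = Set.univ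
  · exact Or.inr hcover
  obtain ⟨k, hk⟩ := (Set.ne_univ_iff_exists_notMem _).1 hcover
  rw [Set.mem_union, not_or] at hk
  exact Or.inl ((hI.1.neighborVars_eq_of_notMem (mem_supp i) (mem_supp k) hk.1).trans
    (hI.1.neighborVars_eq_of_notMem (mem_supp j) (mem_supp k) hk.2).symm)

/-- For a matroidal ideal of degree `d ≥ 2` with full support, for all
variables `x_i, x_j`, either `supp(I : x_i) = supp(I : x_j)` or their union is
everything. -/
theorem stmt2 {K : Type*} [Field K] {n : ℕ} (hn : 0 < n)
    (I : Ideal (MvPolynomial (Fin n) K)) (d : ℕ) (hd : 2 ≤ d)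
    (hI : IsMatroidal K n I d) (hsupp : suppI K n I = Set.univ) :
    ∀ i j : Fin n,
      suppI K n (colonVar K n I i) = suppI K n (colonVar K n I j) ∨
      suppI K n (colonVar K n I i) ∪ suppI K n (colonVar K n I j) = Set.univ :=
  stmt2_general I d hI hsupp
end
end

section
/- Let p_1,...,p_t be monomial prime ideals in R = K[x_1,...,x_n] with pairwise disjoint sets of variable generators, all of the same height, and let a_1,...,a_t be positive integers. Then the product ideal I = p_1^{a_1} p_2^{a_2} ··· p_t^{a_t} is an unmixed polymatroidal ideal of degree Σ a_i. -/
noncomputable section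
open MvPolynomial

variable (K : Type*) [Field K] (n : ℕ)

/-!
Because the blocks `V i` are disjoint, a polynomial lies in `I = ∏ pᵢ ^ aᵢ` exactly when each of
its monomials has degree at least `aᵢ` in the variables of `V i`, for every `i`; in particular
`I = ⨅ pᵢ ^ aᵢ`. The minimal generators of `I` are then the monomials of degree exactly `aᵢ` in
each block and involving no other variable, so all have degree `∑ aᵢ`, and moving one unit of
exponent inside a block is the exchange property. Each `pᵢ ^ aᵢ` is `pᵢ`-primary because the
`V i`-weighted order of power series over a domain is additive; hence every associated prime of
`R ⧸ I` is one of the `pᵢ`, and these all have the same height.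
-/

open scoped Function

namespace Finsupp

variable {σ : Type*}

def degreeOn (s : Finset σ) : (σ →₀ ℕ) →+ ℕ :=
  weight ((s : Set σ).indicator 1)

theorem degreeOn_apply (s : Finset σ) (d : σ →₀ ℕ) : degreeOn s d = ∑ i ∈ s, d i := by
  classical
  rw [degreeOn, weight_apply, Finsupp.sum]
  simp only [Set.indicator_apply, Finset.mem_coe, Pi.one_apply, smul_eq_mul, mul_ite, mul_one,
    mul_zero]
  rw [Finset.sum_ite_mem, Finset.inter_comm]
  exact Finset.sum_subset Finset.inter_subset_left fun i hi hi' => by simpa [hi] using hi'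

theorem degreeOn_single (s : Finset σ) (i : σ) [Decidable (i ∈ s)] :
    degreeOn s (single i 1) = if i ∈ s then 1 else 0 := by
  simp [degreeOn, weight_single, Set.indicator_apply]

theorem degreeOn_mono (s : Finset σ) {d d' : σ →₀ ℕ} (h : d ≤ d') :
    degreeOn s d ≤ degreeOn s d' := by
  simp only [degreeOn_apply]
  exact Finset.sum_le_sum fun i _ => h i

theorem degreeOn_eq_degree {s : Finset σ} {d : σ →₀ ℕ} (h : d.support ⊆ s) :
    degreeOn s d = d.degree := by
  rw [degreeOn_apply, degree_apply]
  exact (Finset.sum_subset h fun i _ hi => notMem_support_iff.1 hi).symm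

theorem degreeOn_eq_zero {s : Finset σ} {d : σ →₀ ℕ} (h : Disjoint d.support s) :
    degreeOn s d = 0 := by
  rw [degreeOn_apply]
  exact Finset.sum_eq_zero fun i hi => notMem_support_iff.1 (Finset.disjoint_right.1 h hi)

theorem le_degreeOn_iff {s : Finset σ} {d : σ →₀ ℕ} {a : ℕ} :
    a ≤ degreeOn s d ↔ ∃ x ≤ d, x.support ⊆ s ∧ x.degree = a := by
  classical
  constructor
  · intro h
    have hfilter : (d.filter (· ∈ s)).support ⊆ s := by
      intro i hi
      simp only [support_filter, Finset.mem_filter] at hi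
      exact hi.2
    obtain ⟨x, hx, rfl⟩ := exists_le_degree_eq _ a (by rwa [← degreeOn_eq_degree hfilter,
      show degreeOn s (d.filter (· ∈ s)) = degreeOn s d by
        simp [degreeOn_apply, filter_apply]])
    exact ⟨x, hx.trans fun i => by simp only [filter_apply]; split_ifs <;> simp,
      (support_mono hx).trans hfilter, rfl⟩
  · rintro ⟨x, hx, hxs, rfl⟩
    exact (degreeOn_eq_degree hxs).ge.trans (degreeOn_mono s hx)

theorem degreeOn_exchange {s : Finset σ} {u : σ →₀ ℕ} {i j : σ} (hi : u i ≠ 0)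
    (hij : i ∈ s ↔ j ∈ s) : degreeOn s (u - single i 1 + single j 1) = degreeOn s u := by
  classical
  conv_rhs => rw [← tsub_add_cancel_of_le (single_le_iff.2 (Nat.one_le_iff_ne_zero.2 hi))]
  simp only [map_add, degreeOn_single, hij]

section Blocks

variable {ι : Type*} [Fintype ι] {V : ι → Finset σ}

theorem sum_le_of_support_subset (hV : Pairwise (Disjoint on V)) {x : ι → σ →₀ ℕ}
    {d : σ →₀ ℕ} (hxV : ∀ i, (x i).support ⊆ V i) (hxd : ∀ i, x i ≤ d) : ∑ i, x i ≤ d := by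
  intro j
  rw [finsetSum_apply]
  by_cases hj : ∃ k, j ∈ V k
  · obtain ⟨k, hk⟩ := hj
    rw [Finset.sum_eq_single k (fun i _ hik => notMem_support_iff.1 fun hji =>
      Finset.disjoint_left.1 (hV hik) (hxV i hji) hk) (by simp)]
    exact hxd k j
  · push Not at hj
    rw [Finset.sum_eq_zero fun i _ => notMem_support_iff.1 fun hji => hj i (hxV i hji)]
    exact Nat.zero_le _

theorem degreeOn_sum_of_support_subset (hV : Pairwise (Disjoint on V)) {x : ι → σ →₀ ℕ}
    (hxV : ∀ i, (x i).support ⊆ V i) (k : ι) : degreeOn (V k) (∑ i, x i) = (x k).degree := by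
  rw [map_sum, Finset.sum_eq_single k (fun i _ hik => degreeOn_eq_zero ((hV hik).mono_left (hxV i)))
    (by simp), degreeOn_eq_degree (hxV k)]

theorem degree_eq_sum_degreeOn (hV : Pairwise (Disjoint on V)) {d : σ →₀ ℕ}
    (hd : ∀ j, (∀ i, j ∉ V i) → d j = 0) : d.degree = ∑ i, degreeOn (V i) d := by
  classical
  have hsupp : d.support ⊆ Finset.univ.biUnion V := fun j hj => by
    by_contra h
    exact mem_support_iff.1 hj
      (hd j fun i hi => h (Finset.mem_biUnion.2 ⟨i, Finset.mem_univ i, hi⟩))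
  rw [degree_apply, Finset.sum_subset hsupp fun j _ hj => notMem_support_iff.1 hj,
    Finset.sum_biUnion fun i _ k _ hik => hV hik]
  simp only [degreeOn_apply]

end Blocks

end Finsupp

namespace MvPolynomial

open Finsupp

variable {σ R : Type*} [CommSemiring R]

open scoped Pointwise in
theorem span_X_image_pow (s : Set σ) (a : ℕ) :
    Ideal.span (X '' s : Set (MvPolynomial σ R)) ^ a =
      Ideal.span ((monomial · 1) '' {x | x.degree = a ∧ ↑x.support ⊆ s}) := by
  rw [Ideal.span, Submodule.span_pow, image_pow_eq_finsuppProd_image]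
  simp [monomial_eq]

theorem mem_span_X_image_pow_iff {s : Finset σ} {a : ℕ} {f : MvPolynomial σ R} :
    f ∈ Ideal.span (X '' (s : Set σ)) ^ a ↔ ∀ d ∈ f.support, a ≤ degreeOn s d := by
  simp only [span_X_image_pow, mem_ideal_span_monomial_image, le_degreeOn_iff,
    Finset.coe_subset]
  exact forall₂_congr fun d _ => ⟨fun ⟨x, ⟨hx, hxs⟩, hxd⟩ => ⟨x, hxd, hxs, hx⟩,
    fun ⟨x, hxd, hxs, hx⟩ => ⟨x, ⟨hx, hxs⟩, hxd⟩⟩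

theorem mem_span_X_image_pow_iff_le_weightedOrder {s : Finset σ} {a : ℕ}
    {f : MvPolynomial σ R} :
    f ∈ Ideal.span (X '' (s : Set σ)) ^ a ↔
      a ≤ (f : MvPowerSeries σ R).weightedOrder ((s : Set σ).indicator 1) := by
  rw [mem_span_X_image_pow_iff]
  constructor
  · refine fun h => MvPowerSeries.le_weightedOrder _ fun d hd => ?_
    rw [coeff_coe, ← notMem_support_iff]
    exact fun hd' => (h d hd').not_gt (by exact_mod_cast hd)
  · refine fun h d hd => not_lt.1 fun hlt => mem_support_iff.1 hd ?_
    rw [← coeff_coe]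
    exact MvPowerSeries.coeff_eq_zero_of_lt_weightedOrder _ ((Nat.cast_lt.2 hlt).trans_le h)

section Blocks

variable {ι : Type*} [Fintype ι] {V : ι → Finset σ} {a : ι → ℕ}

theorem monomial_sum_mem_prod_span_X_image_pow {x : ι → σ →₀ ℕ}
    (hx : ∀ i, (x i).support ⊆ V i ∧ (x i).degree = a i) (c : R) :
    monomial (∑ i, x i) c ∈ ∏ i, Ideal.span (X '' (V i : Set σ)) ^ a i := by
  rw [← mul_one c, ← smul_eq_mul, ← smul_monomial, monomial_sum_one]
  refine Submodule.smul_of_tower_mem _ c (Ideal.prod_mem_prod fun i _ => ?_)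
  rw [mem_span_X_image_pow_iff]
  intro d hd
  rw [Finset.mem_singleton.1 (support_monomial_subset hd), degreeOn_eq_degree (hx i).1, (hx i).2]

theorem mem_prod_span_X_image_pow_iff (hV : Pairwise (Disjoint on V)) {f : MvPolynomial σ R} :
    f ∈ ∏ i, Ideal.span (X '' (V i : Set σ)) ^ a i ↔
      ∀ d ∈ f.support, ∀ i, a i ≤ degreeOn (V i) d := by
  refine ⟨fun h d hd i => mem_span_X_image_pow_iff.1
    (Ideal.prod_le_inf.trans (Finset.inf_le (Finset.mem_univ i)) h) d hd, fun h => ?_⟩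
  rw [f.as_sum]
  refine Ideal.sum_mem _ fun d hd => ?_
  choose x hxd hxV hxa using fun i => le_degreeOn_iff.1 (h d hd i)
  have hsplit : monomial d (coeff d f) =
      monomial (d - ∑ i, x i) 1 * monomial (∑ i, x i) (coeff d f) := by
    rw [monomial_mul, one_mul, tsub_add_cancel_of_le (sum_le_of_support_subset hV hxV hxd)]
  rw [hsplit]
  exact Ideal.mul_mem_left _ _
    (monomial_sum_mem_prod_span_X_image_pow (fun i => ⟨hxV i, hxa i⟩) _)

theorem monomial_one_mem_prod_span_X_image_pow_iff [Nontrivial R]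
    (hV : Pairwise (Disjoint on V)) {d : σ →₀ ℕ} :
    monomial d (1 : R) ∈ ∏ i, Ideal.span (X '' (V i : Set σ)) ^ a i ↔
      ∀ i, a i ≤ degreeOn (V i) d := by
  classical
  rw [mem_prod_span_X_image_pow_iff hV, support_monomial, if_neg one_ne_zero]
  simp

theorem prod_span_X_image_pow_eq_iInf (hV : Pairwise (Disjoint on V)) :
    ∏ i, Ideal.span (X '' (V i : Set σ)) ^ a i =
      ⨅ i, (Ideal.span (X '' (V i : Set σ)) ^ a i : Ideal (MvPolynomial σ R)) := by
  ext f
  simp only [mem_prod_span_X_image_pow_iff hV, Ideal.mem_iInf, mem_span_X_image_pow_iff]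
  exact ⟨fun h i d hd => h d hd i, fun h d hd i => h i d hd⟩

end Blocks

variable [IsDomain R] {s : Finset σ} {a : ℕ}

theorem mem_span_X_image_pow_of_mul_mem {x y : MvPolynomial σ R}
    (hxy : x * y ∈ Ideal.span (X '' (s : Set σ)) ^ a) (hy : y ∉ Ideal.span (X '' (s : Set σ))) :
    x ∈ Ideal.span (X '' (s : Set σ)) ^ a := by
  rw [← pow_one (Ideal.span _), mem_span_X_image_pow_iff_le_weightedOrder, not_le,
    Nat.cast_one, Order.lt_one_iff] at hy
  rw [mem_span_X_image_pow_iff_le_weightedOrder, coe_mul, MvPowerSeries.weightedOrder_mul, hy,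
    add_zero] at hxy
  rwa [mem_span_X_image_pow_iff_le_weightedOrder]

theorem span_X_image_pow_ne_top (ha : a ≠ 0) :
    Ideal.span (X '' (s : Set σ)) ^ a ≠ (⊤ : Ideal (MvPolynomial σ R)) := by
  rw [Ne, Ideal.eq_top_iff_one, mem_span_X_image_pow_iff, support_one]
  simpa [Nat.pos_iff_ne_zero] using ha

theorem isPrime_span_X_image (s : Finset σ) :
    (Ideal.span (X '' (s : Set σ)) : Ideal (MvPolynomial σ R)).IsPrime := by
  refine Ideal.isPrime_iff.2 ⟨by simpa using span_X_image_pow_ne_top (R := R) (s := s) one_ne_zero,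
    fun {x y} hxy => or_iff_not_imp_right.2 fun hy => ?_⟩
  simpa using mem_span_X_image_pow_of_mul_mem (a := 1) (by simpa using hxy) hy

theorem radical_span_X_image_pow (ha : a ≠ 0) :
    (Ideal.span (X '' (s : Set σ)) ^ a : Ideal (MvPolynomial σ R)).radical =
      Ideal.span (X '' (s : Set σ)) := by
  rw [Ideal.radical_pow _ ha, (isPrime_span_X_image s).radical]

theorem isPrimary_span_X_image_pow (ha : a ≠ 0) :
    (Ideal.span (X '' (s : Set σ)) ^ a : Ideal (MvPolynomial σ R)).IsPrimary := by
  refine Ideal.isPrimary_iff.2 ⟨span_X_image_pow_ne_top ha, fun {x y} hxy => ?_⟩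
  rw [radical_span_X_image_pow ha]
  exact or_iff_not_imp_right.2 (mem_span_X_image_pow_of_mul_mem hxy)

end MvPolynomial

theorem Ideal.exists_eq_radical_of_mem_associatedPrimes_iInf {R ι : Type*} [CommRing R]
    [Fintype ι] {q : ι → Ideal R} (hq : ∀ i, (q i).IsPrimary) {p : Ideal R}
    (hp : p ∈ associatedPrimes R (R ⧸ ⨅ i, q i)) : ∃ i, p = (q i).radical := by
  classical
  -- `p` is the radical of the annihilator `J` of some `y`, and `J` lies between the product of
  -- the `q i` not containing `y` and the radical of each of them.
  obtain ⟨hprime, x, rfl⟩ := hp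
  obtain ⟨y, rfl⟩ := Ideal.Quotient.mk_surjective x
  set J := (⊥ : Submodule R (R ⧸ ⨅ i, q i)).colon {Ideal.Quotient.mk _ y}
  have hJ : ∀ r, r ∈ J ↔ ∀ i, r * y ∈ q i := fun r => by
    rw [Submodule.mem_colon_singleton, Submodule.mem_bot, Algebra.smul_def,
      Ideal.Quotient.algebraMap_eq, ← map_mul, Ideal.Quotient.eq_zero_iff_mem, Ideal.mem_iInf]
  set S := Finset.univ.filter (y ∉ q ·)
  have hSJ : ∏ i ∈ S, q i ≤ J := fun r hr => (hJ r).2 fun i => by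
    by_cases hi : y ∈ q i
    · exact Ideal.mul_mem_left _ _ hi
    · exact Ideal.mul_mem_right _ _ (Ideal.prod_le_inf.trans (Finset.inf_le (by simpa [S])) hr)
  obtain ⟨k, hkS, hqk⟩ := hprime.prod_le.1 (hSJ.trans Ideal.le_radical)
  have hJk : J ≤ (q k).radical := fun r hr =>
    ((Ideal.isPrimary_iff.1 (hq k)).2 (mul_comm r y ▸ (hJ r).1 hr k)).resolve_left
      (Finset.mem_filter.1 hkS).2
  refine ⟨k, le_antisymm ?_ (hprime.radical_le_iff.2 hqk)⟩
  simpa only [Ideal.radical_idem] using Ideal.radical_mono hJk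

section PrimeOf

open Finsupp

variable {K : Type*} [Field K] {n : ℕ}

theorem primeOf_eq_span (s : Finset (Fin n)) :
    primeOf K n s = Ideal.span (X '' (s : Set (Fin n))) := rfl

theorem isMonomialIdeal_of_forall_monomial_mem {I : Ideal (MvPolynomial (Fin n) K)}
    (hI : ∀ f ∈ I, ∀ d ∈ f.support, monomial d (1 : K) ∈ I) : IsMonomialIdeal K n I :=
  ⟨{d | monomial d (1 : K) ∈ I}, le_antisymm
    (fun f hf => mem_ideal_span_monomial_image.2 fun d hd => ⟨d, hI f hf d hd, le_rfl⟩)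
    (Ideal.span_le.2 (by rintro _ ⟨d, hd, rfl⟩; exact hd))⟩

variable {ι : Type*} [Fintype ι] {V : ι → Finset (Fin n)} {a : ι → ℕ}

theorem mem_minGens_prod_primeOf_pow_iff (hV : Pairwise (Disjoint on V)) {m : Fin n →₀ ℕ} :
    m ∈ minGens K n (∏ i, primeOf K n (V i) ^ a i) ↔
      (∀ i, degreeOn (V i) m = a i) ∧ ∀ j, (∀ i, j ∉ V i) → m j = 0 := by
  simp only [minGens, primeOf_eq_span, Set.mem_ofPred_eq,
    monomial_one_mem_prod_span_X_image_pow_iff hV]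
  constructor
  · rintro ⟨hge, hmin⟩
    choose x hxm hxV hxa using fun i => le_degreeOn_iff.1 (hge i)
    have hx : ∑ i, x i = m := hmin _ (fun i => by rw [degreeOn_sum_of_support_subset hV hxV, hxa])
      (sum_le_of_support_subset hV hxV hxm)
    subst hx
    refine ⟨fun i => by rw [degreeOn_sum_of_support_subset hV hxV, hxa], fun j hj => ?_⟩
    rw [finsetSum_apply]
    exact Finset.sum_eq_zero fun i _ => notMem_support_iff.1 fun h => hj i (hxV i h)
  · rintro ⟨hdeg, hout⟩
    refine ⟨fun i => (hdeg i).ge, fun m' hm' hle => Finsupp.ext fun j => ?_⟩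
    by_cases hj : ∃ i, j ∈ V i
    · obtain ⟨i, hi⟩ := hj
      have hsum : degreeOn (V i) m' = degreeOn (V i) m :=
        le_antisymm (degreeOn_mono _ hle) ((hdeg i).trans_le (hm' i))
      rw [degreeOn_apply, degreeOn_apply] at hsum
      exact (Finset.sum_eq_sum_iff_of_le fun l _ => hle l).1 hsum j hi
    · push Not at hj
      rw [hout j hj]
      exact Nat.le_zero.1 (hout j hj ▸ hle j)

theorem expDeg_of_mem_minGens_prod_primeOf_pow (hV : Pairwise (Disjoint on V)) {m : Fin n →₀ ℕ}
    (hm : m ∈ minGens K n (∏ i, primeOf K n (V i) ^ a i)) : expDeg n m = ∑ i, a i := by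
  obtain ⟨hdeg, hout⟩ := (mem_minGens_prod_primeOf_pow_iff hV).1 hm
  rw [show expDeg n m = m.degree from rfl, degree_eq_sum_degreeOn hV hout]
  exact Finset.sum_congr rfl fun i _ => hdeg i

theorem exists_exchange_mem_minGens_prod_primeOf_pow (hV : Pairwise (Disjoint on V))
    {u v : Fin n →₀ ℕ} (hu : u ∈ minGens K n (∏ i, primeOf K n (V i) ^ a i))
    (hv : v ∈ minGens K n (∏ i, primeOf K n (V i) ^ a i)) {i : Fin n} (hvi : v i < u i) :
    ∃ j, u j < v j ∧
      u - single i 1 + single j 1 ∈ minGens K n (∏ i, primeOf K n (V i) ^ a i) := by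
  obtain ⟨hudeg, huout⟩ := (mem_minGens_prod_primeOf_pow_iff hV).1 hu
  obtain ⟨hvdeg, -⟩ := (mem_minGens_prod_primeOf_pow_iff hV).1 hv
  obtain ⟨k, hik⟩ : ∃ k, i ∈ V k := by
    by_contra! h
    exact (huout i h ▸ hvi).not_ge (Nat.zero_le _)
  obtain ⟨j, hjk, hj⟩ : ∃ j ∈ V k, u j < v j := by
    by_contra! h
    have hlt := Finset.sum_lt_sum h ⟨i, hik, hvi⟩
    rw [← degreeOn_apply, ← degreeOn_apply, hudeg, hvdeg] at hlt
    exact hlt.false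
  have hsame : ∀ q, i ∈ V q ↔ j ∈ V q := fun q => by
    rcases eq_or_ne q k with rfl | hqk
    · exact iff_of_true hik hjk
    · exact iff_of_false (Finset.disjoint_left.1 (hV hqk.symm) hik)
        (Finset.disjoint_left.1 (hV hqk.symm) hjk)
  refine ⟨j, hj, (mem_minGens_prod_primeOf_pow_iff hV).2 ⟨fun q => ?_, fun l hl => ?_⟩⟩
  · rw [degreeOn_exchange (by omega) (hsame q), hudeg]
  · have hjl : j ≠ l := fun h => hl k (h ▸ hjk)
    simp [huout l hl, single_apply, hjl]

end PrimeOf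

theorem stmt17_general {K : Type*} [Field K] {n : ℕ}
    (t : ℕ) (V : Fin t → Finset (Fin n)) (a : Fin t → ℕ)
    (ha : ∀ i, 1 ≤ a i)
    (hdisj : ∀ i j, i ≠ j → Disjoint (V i) (V j))
    (hht : ∀ i j, htIdeal K n (primeOf K n (V i)) = htIdeal K n (primeOf K n (V j))) :
    IsPolymatroidal K n (∏ i, primeOf K n (V i) ^ a i) (∑ i, a i) ∧
    IsUnmixed K n (∏ i, primeOf K n (V i) ^ a i) := by
  have hpair : Pairwise (Disjoint on V) := fun i j h => hdisj i j h
  have ha' : ∀ i, a i ≠ 0 := fun i => Nat.one_le_iff_ne_zero.1 (ha i)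
  refine ⟨⟨isMonomialIdeal_of_forall_monomial_mem fun f hf d hd => ?_,
    fun m => expDeg_of_mem_minGens_prod_primeOf_pow hpair,
    fun u hu v hv i => exists_exchange_mem_minGens_prod_primeOf_pow hpair hu hv⟩, ?_⟩
  · exact (monomial_one_mem_prod_span_X_image_pow_iff hpair).2
      ((mem_prod_span_X_image_pow_iff hpair).1 hf d hd)
  · intro p hp q hq
    have hI : ∏ i, primeOf K n (V i) ^ a i = ⨅ i, primeOf K n (V i) ^ a i :=
      prod_span_X_image_pow_eq_iInf hpair
    rw [hI] at hp hq
    obtain ⟨k, rfl⟩ := Ideal.exists_eq_radical_of_mem_associatedPrimes_iInf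
      (fun i => isPrimary_span_X_image_pow (ha' i)) hp
    obtain ⟨l, rfl⟩ := Ideal.exists_eq_radical_of_mem_associatedPrimes_iInf
      (fun i => isPrimary_span_X_image_pow (ha' i)) hq
    rw [primeOf_eq_span, primeOf_eq_span, radical_span_X_image_pow (ha' k),
      radical_span_X_image_pow (ha' l)]
    exact hht k l

/-- A product of powers of monomial primes on pairwise disjoint sets
of variables, all of the same height, is an unmixed polymatroidal ideal of degree
`Σ a_i`. -/
theorem stmt17 {K : Type*} [Field K] {n : ℕ} (hn : 0 < n)
    (t : ℕ) (ht : 1 ≤ t) (V : Fin t → Finset (Fin n)) (a : Fin t → ℕ)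
    (hV : ∀ i, (V i).Nonempty) (ha : ∀ i, 1 ≤ a i)
    (hdisj : ∀ i j, i ≠ j → Disjoint (V i) (V j))
    (hht : ∀ i j, htIdeal K n (primeOf K n (V i)) = htIdeal K n (primeOf K n (V j))) :
    IsPolymatroidal K n (∏ i, primeOf K n (V i) ^ a i) (∑ i, a i) ∧
    IsUnmixed K n (∏ i, primeOf K n (V i) ^ a i) :=
  stmt17_general t V a ha hdisj hht
end
end
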